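/- arXiv:1610.06304 — 3 statements merged into one kernel-verified Lean document; each statement's English description precedes it below -/
import Mathlib

section
/- Suppose in addition that there is N₀ with |U_{n+1}| > |U_n| > 0 for all n ≥ N₀. Then there exist constants C₅ ≥ C₆ > 0 and an integer N ≥ N₀ such that for all integers n, n₁ with n ≥ N and N₀ ≤ n₁ < n one has C₆ · n^σ · |α|^n ≤ |U_n − U_{n₁}| ≤ C₅ · n^σ · |α|^n. -/
/-!
Dividing the Binet formula by `αⁿ`, every non-dominant term becomes a polynomial times a
geometric sequence of ratio of modulus `< 1`, hence tends to `0`; dividing further by `n ^ σ`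
gives `|U n| / (n ^ σ |α| ⁿ) → |ℓ|`, where `ℓ ≠ 0` is the leading coefficient of `a`.
As `|U|` increases from `N₀` on, `|U n₁| ≤ |U (n - 1)|`, which is at most about
`|ℓ| n ^ σ |α| ⁿ / |α|`; since `|α| > 1` this leaves a fixed proportion of `|U n|` in
`|U n| - |U n₁|`, while `|U n - U n₁| ≤ 2 |U n|` gives the upper bound.
-/

open Polynomial

/-- A linear recurrence sequence defined over the integers, together with the data of the
distinct roots of its characteristic polynomial and the polynomial coefficients in its
Binet-type representation `U n = ∑ i, aᵢ(n) · αᵢⁿ`. By convention the root with index `0`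
is the distinguished (dominant) one. -/
structure LinRecSeq where
  /-- the integer sequence -/
  U : ℕ → ℤ
  /-- the order of the recurrence -/
  k : ℕ
  kpos : 0 < k
  /-- the integer coefficients of the recurrence: `c i` stands for `c_{i+1}` -/
  c : Fin k → ℤ
  clast : c ⟨k - 1, by omega⟩ ≠ 0
  recur : ∀ n : ℕ, U (n + k) = ∑ i : Fin k, c i * U (n + (k - 1 - i.val))
  /-- the number of distinct roots of the characteristic polynomial -/
  t : ℕ
  tpos : 0 < t
  /-- the distinct complex roots of the characteristic polynomial -/
  root : Fin t → ℂ
  root_inj : Function.Injective root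
  /-- the multiplicities of the roots -/
  m : Fin t → ℕ
  mpos : ∀ i, 0 < m i
  char_eq : (X : ℂ[X]) ^ k - ∑ i : Fin k, C (c i : ℂ) * X ^ (k - 1 - i.val)
      = ∏ i : Fin t, (X - C (root i)) ^ m i
  /-- the polynomial coefficients `aᵢ` (nonzero, of degree `≤ σᵢ - 1`, with algebraic
  coefficients) -/
  a : Fin t → ℂ[X]
  a_ne : ∀ i, a i ≠ 0
  a_deg : ∀ i, (a i).natDegree ≤ m i - 1
  a_alg : ∀ i j, IsAlgebraic ℚ ((a i).coeff j)
  formula : ∀ n : ℕ, (U n : ℂ) = ∑ i : Fin t, (a i).eval (n : ℂ) * root i ^ n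

namespace LinRecSeq

variable (R : LinRecSeq)

/-- the distinguished index of the dominant root -/
def i0 : Fin R.t := ⟨0, R.tpos⟩

/-- `R` has dominant root `z` if `z` is the distinguished root and all other roots are
strictly smaller in absolute value. -/
def HasDomRoot (z : ℂ) : Prop :=
  R.root R.i0 = z ∧ ∀ i, i ≠ R.i0 → ‖R.root i‖ < ‖z‖

/-- the polynomial coefficient of the dominant root (denoted `a(n)` resp. `b(m)`) -/
noncomputable def domPoly : ℂ[X] := R.a R.i0

/-- the degree of the polynomial coefficient of the dominant root
(denoted `σ` resp. `τ`) -/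
noncomputable def domDeg : ℕ := R.domPoly.natDegree

end LinRecSeq

/-- Two nonzero complex numbers are multiplicatively independent if the only integers
`a, b` with `αᵃ βᵇ = 1` are `a = b = 0`. -/
def MultIndep (α β : ℂ) : Prop := ∀ a b : ℤ, α ^ a * β ^ b = 1 → a = 0 ∧ b = 0

open Filter Topology Finset

theorem Polynomial.eval_div_pow_natDegree_eq_eval_reverse {K : Type*} [Field K] (P : K[X])
    {x : K} (hx : x ≠ 0) : P.eval x / x ^ P.natDegree = P.reverse.eval x⁻¹ := by
  let := invertibleOfNonzero hx
  rw [eval, ← eval₂_reverse_mul_pow (RingHom.id K) x P,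
    mul_div_cancel_right₀ _ (pow_ne_zero _ hx), invOf_eq_inv, eval]

theorem Polynomial.tendsto_eval_natCast_div_pow_natDegree {𝕜 : Type*} [RCLike 𝕜] (P : 𝕜[X]) :
    Tendsto (fun n : ℕ => P.eval (n : 𝕜) / (n : 𝕜) ^ P.natDegree) atTop (𝓝 P.leadingCoeff) := by
  have hrev : Tendsto (fun n : ℕ => P.reverse.eval (n : 𝕜)⁻¹) atTop (𝓝 P.leadingCoeff) := by
    rw [← coeff_zero_reverse, coeff_zero_eq_eval_zero]
    exact (P.reverse.continuous.tendsto 0).comp tendsto_inv_atTop_nhds_zero_nat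
  refine hrev.congr' ?_
  filter_upwards [eventually_ne_atTop 0] with n hn
  rw [P.eval_div_pow_natDegree_eq_eval_reverse (Nat.cast_ne_zero.mpr hn)]

theorem Polynomial.tendsto_eval_natCast_mul_pow_of_norm_lt_one {𝕜 : Type*} [RCLike 𝕜]
    (P : 𝕜[X]) {z : 𝕜} (hz : ‖z‖ < 1) :
    Tendsto (fun n : ℕ => P.eval (n : 𝕜) * z ^ n) atTop (𝓝 0) := by
  have hterm (j : ℕ) : Tendsto (fun n : ℕ => P.coeff j * ((n : 𝕜) ^ j * z ^ n)) atTop (𝓝 0) := by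
    simpa using ((summable_pow_mul_geometric_of_norm_lt_one j hz).tendsto_atTop_zero).const_mul
      (P.coeff j)
  simpa [eval_eq_sum_range, sum_mul, mul_assoc] using
    tendsto_finsetSum (range (P.natDegree + 1)) fun j _ => hterm j

theorem tendsto_div_natCast_pow_of_tendsto_zero {𝕜 : Type*} [RCLike 𝕜] {f : ℕ → 𝕜}
    (hf : Tendsto f atTop (𝓝 0)) (k : ℕ) :
    Tendsto (fun n : ℕ => f n / (n : 𝕜) ^ k) atTop (𝓝 0) := by
  refine squeeze_zero_norm' ?_ (tendsto_zero_iff_norm_tendsto_zero.mp hf)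
  filter_upwards [eventually_ge_atTop 1] with n hn
  rw [norm_div, norm_pow, RCLike.norm_natCast]
  exact div_le_self (norm_nonneg _) (one_le_pow₀ (by exact_mod_cast hn))

theorem Filter.Tendsto.eventually_mul_lt_and_lt_mul {f T : ℕ → ℝ} {L lo hi : ℝ}
    (hlim : Tendsto (fun n => f n / T n) atTop (𝓝 L)) (hT : ∀ᶠ n in atTop, 0 < T n)
    (hlo : lo < L) (hhi : L < hi) : ∀ᶠ n in atTop, lo * T n < f n ∧ f n < hi * T n := by
  filter_upwards [hlim.eventually_const_lt hlo, hlim.eventually_lt_const hhi, hT] with n hl hh hTn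
  exact ⟨(lt_div_iff₀ hTn).mp hl, (div_lt_iff₀ hTn).mp hh⟩

theorem exists_abs_sub_bounds_of_tendsto_abs_div {u T : ℕ → ℝ} {A L : ℝ} {N₀ : ℕ}
    (hA : 1 < A) (hL : 0 < L) (hT : ∀ᶠ n in atTop, 0 < T n) (hTA : ∀ n, A * T n ≤ T (n + 1))
    (hlim : Tendsto (fun n => |u n| / T n) atTop (𝓝 L))
    (hmono : MonotoneOn (fun n => |u n|) (Set.Ici N₀)) :
    ∃ C₅ C₆ : ℝ, 0 < C₆ ∧ C₆ ≤ C₅ ∧ ∃ N : ℕ, N₀ ≤ N ∧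
      ∀ n n₁ : ℕ, N ≤ n → N₀ ≤ n₁ → n₁ < n →
        C₆ * T n ≤ |u n - u n₁| ∧ |u n - u n₁| ≤ C₅ * T n := by
  have hA0 : 0 < A := one_pos.trans hA
  obtain ⟨hi, hLhi, hhiLA⟩ := exists_between (lt_mul_of_one_lt_right hL hA)
  obtain ⟨lo, hhilo, hloL⟩ := exists_between ((div_lt_iff₀ hA0).mpr hhiLA)
  have hhiA : 0 < hi / A := div_pos (hL.trans hLhi) hA0
  obtain ⟨N₁, hN₁⟩ := eventually_atTop.mp (hlim.eventually_mul_lt_and_lt_mul hT hloL hLhi)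
  refine ⟨2 * hi, lo - hi / A, sub_pos.mpr hhilo, by linarith, max N₀ (N₁ + 1), le_max_left _ _, ?_⟩
  intro n n₁ hn hn₁ hlt
  obtain ⟨m, rfl⟩ : ∃ m, n = m + 1 := ⟨n - 1, by omega⟩
  have hprev : |u n₁| ≤ |u m| := hmono (Set.mem_Ici.mpr hn₁) (Set.mem_Ici.mpr (by omega)) (by omega)
  have hstep : |u m| ≤ |u (m + 1)| :=
    hmono (Set.mem_Ici.mpr (by omega)) (Set.mem_Ici.mpr (by omega)) m.le_succ
  have hm := hN₁ m (by omega)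
  have hm1 := hN₁ (m + 1) (by omega)
  have hTm : hi * T m ≤ hi / A * T (m + 1) :=
    calc hi * T m = hi / A * (A * T m) := by field_simp
      _ ≤ hi / A * T (m + 1) := by gcongr; exact hTA m
  constructor
  · calc (lo - hi / A) * T (m + 1) ≤ |u (m + 1)| - |u n₁| := by linarith
      _ ≤ |u (m + 1) - u n₁| := abs_sub_abs_le_abs_sub _ _
  · calc |u (m + 1) - u n₁| ≤ |u (m + 1)| + |u n₁| := abs_sub _ _
      _ ≤ 2 * hi * T (m + 1) := by linarith

namespace LinRecSeq

variable (R : LinRecSeq) {α : ℂ}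

theorem div_pow_sub_eval_domPoly (hdom : R.HasDomRoot α) (hα : α ≠ 0) (n : ℕ) :
    (R.U n : ℂ) / α ^ n - R.domPoly.eval (n : ℂ)
      = ∑ i ∈ univ.erase R.i0, (R.a i).eval (n : ℂ) * (R.root i / α) ^ n := by
  rw [R.formula, ← add_sum_erase _ _ (mem_univ R.i0), hdom.1, add_div, sum_div, domPoly,
    mul_div_cancel_right₀ _ (pow_ne_zero _ hα), add_sub_cancel_left]
  simp only [div_pow, mul_div_assoc]

theorem tendsto_div_pow_sub_eval_domPoly (hdom : R.HasDomRoot α) (hα : α ≠ 0) :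
    Tendsto (fun n : ℕ => (R.U n : ℂ) / α ^ n - R.domPoly.eval (n : ℂ)) atTop (𝓝 0) := by
  simp only [R.div_pow_sub_eval_domPoly hdom hα]
  rw [← sum_const_zero (s := univ.erase R.i0)]
  refine tendsto_finsetSum _ fun i hi => (R.a i).tendsto_eval_natCast_mul_pow_of_norm_lt_one ?_
  rw [norm_div, div_lt_one (norm_pos_iff.mpr hα)]
  exact hdom.2 i (ne_of_mem_erase hi)

theorem tendsto_norm_div_natCast_pow_mul_pow (hdom : R.HasDomRoot α) (hα : α ≠ 0) :
    Tendsto (fun n : ℕ => |(R.U n : ℝ)| / ((n : ℝ) ^ R.domDeg * ‖α‖ ^ n)) atTop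
      (𝓝 ‖R.domPoly.leadingCoeff‖) := by
  have hlim : Tendsto (fun n : ℕ =>
      ((R.U n : ℂ) / α ^ n - R.domPoly.eval (n : ℂ)) / (n : ℂ) ^ R.domDeg
        + R.domPoly.eval (n : ℂ) / (n : ℂ) ^ R.domDeg) atTop (𝓝 (0 + R.domPoly.leadingCoeff)) :=
    (tendsto_div_natCast_pow_of_tendsto_zero (R.tendsto_div_pow_sub_eval_domPoly hdom hα)
      R.domDeg).add R.domPoly.tendsto_eval_natCast_div_pow_natDegree
  rw [zero_add] at hlim
  refine hlim.norm.congr fun n => ?_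
  rw [← add_div, sub_add_cancel, div_div, norm_div, norm_mul, norm_pow, norm_pow,
    Complex.norm_natCast, Complex.norm_intCast, mul_comm]

end LinRecSeq

/-- **Growth of differences.** Suppose in addition there is `N₀` with
`|U (n+1)| > |U n| > 0` for all `n ≥ N₀`. Then there are constants `C₅ ≥ C₆ > 0` and an
integer `N ≥ N₀` such that for all `n, n₁` with `n ≥ N` and `N₀ ≤ n₁ < n` one has
`C₆·n^σ·|α|ⁿ ≤ |U n − U n₁| ≤ C₅·n^σ·|α|ⁿ`. -/
theorem difference_growth_bounds (R : LinRecSeq) (α : ℂ)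
    (hdom : R.HasDomRoot α) (hα : 1 < ‖α‖)
    (N₀ : ℕ) (hmono : ∀ n : ℕ, N₀ ≤ n → 0 < |R.U n| ∧ |R.U n| < |R.U (n + 1)|) :
    ∃ C₅ C₆ : ℝ, 0 < C₆ ∧ C₆ ≤ C₅ ∧ ∃ N : ℕ, N₀ ≤ N ∧
      ∀ n n₁ : ℕ, N ≤ n → N₀ ≤ n₁ → n₁ < n →
        C₆ * (n : ℝ) ^ R.domDeg * ‖α‖ ^ n ≤ |((R.U n : ℝ) - (R.U n₁ : ℝ))| ∧
        |((R.U n : ℝ) - (R.U n₁ : ℝ))| ≤ C₅ * (n : ℝ) ^ R.domDeg * ‖α‖ ^ n := by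
  have hα0 : α ≠ 0 := norm_pos_iff.mp (one_pos.trans hα)
  have hlc : 0 < ‖R.domPoly.leadingCoeff‖ :=
    norm_pos_iff.mpr (leadingCoeff_ne_zero.mpr (R.a_ne R.i0))
  have hpos : ∀ᶠ n : ℕ in atTop, 0 < (n : ℝ) ^ R.domDeg * ‖α‖ ^ n := by
    filter_upwards [eventually_ge_atTop 1] with n hn
    have : (0 : ℝ) < n := by exact_mod_cast hn
    positivity
  have hgrowth (n : ℕ) :
      ‖α‖ * ((n : ℝ) ^ R.domDeg * ‖α‖ ^ n) ≤ ((n + 1 : ℕ) : ℝ) ^ R.domDeg * ‖α‖ ^ (n + 1) :=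
    calc ‖α‖ * ((n : ℝ) ^ R.domDeg * ‖α‖ ^ n) = (n : ℝ) ^ R.domDeg * ‖α‖ ^ (n + 1) := by ring
      _ ≤ ((n + 1 : ℕ) : ℝ) ^ R.domDeg * ‖α‖ ^ (n + 1) := by gcongr; exact_mod_cast n.le_succ
  have habs : MonotoneOn (fun n => |(R.U n : ℝ)|) (Set.Ici N₀) :=
    monotoneOn_nat_Ici_of_le_succ fun n hn => by exact_mod_cast (hmono n hn).2.le
  simpa only [mul_assoc] using exists_abs_sub_bounds_of_tendsto_abs_div hα hlc hpos hgrowth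
    (R.tendsto_norm_div_natCast_pow_mul_pow hdom hα0) habs
end

section
/- There exist constants C₁₆, C₁₇ > 0 and integers N, M such that every solution (n, m, n₁, m₁) of U_n − U_{n₁} = V_m − V_{m₁} with n > n₁ ≥ N₀, m > m₁ ≥ M₀, n ≥ N, m ≥ M satisfies b(m) ≠ 0 and | (a(n)·α^n)/(b(m)·β^m) − 1 | ≤ max{ C₁₆·(α'/|α|)^{n−n₁}, C₁₇·(β'/|β|)^{m−m₁} }. -/
open Polynomial

/-!
Write `U n = a(n) αⁿ + E n` and `V m = b(m) βᵐ + F m`. The non-dominant roots give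
`E n = O(α'ⁿ)`, so `U n ~ a(n) αⁿ` and, `a` being a nonzero polynomial, `U (n + 1) / U n → α`.
With `ρ = α' / |α| < 1`, `|U n|` therefore eventually grows by a factor `ρ⁻¹` per step, and
together with the monotonicity from `N₀` on this gives `|U n₁| + |E n| = O(ρ^(n - n₁) |U n|)` and
`|U n - U n₁| ≫ |U n|`; likewise for `V`. Now `a(n) αⁿ - b(m) βᵐ = U n₁ - V m₁ - E n + F m` and
`|U n| ≪ |U n - U n₁| = |V m - V m₁| ≪ |V m| ≪ |b(m) βᵐ|`, so dividing by `b(m) βᵐ` gives the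
bound.
-/

open Filter Topology Asymptotics Finset

namespace Polynomial

variable {𝕜 : Type*} [RCLike 𝕜]

theorem tendsto_eval_natCast_div_pow_natDegree_s10 (P : 𝕜[X]) :
    Tendsto (fun n : ℕ => P.eval (n : 𝕜) / (n : 𝕜) ^ P.natDegree) atTop
      (𝓝 P.leadingCoeff) := by
  have hrev : Tendsto (fun n : ℕ => P.reverse.eval (n : 𝕜)⁻¹) atTop (𝓝 P.leadingCoeff) := by
    rw [← coeff_zero_reverse, coeff_zero_eq_eval_zero]
    exact (P.reverse.continuous.tendsto 0).comp tendsto_inv_atTop_nhds_zero_nat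
  refine hrev.congr' ((eventually_ne_atTop 0).mono fun n hn => ?_)
  have hn' : (n : 𝕜) ≠ 0 := Nat.cast_ne_zero.2 hn
  let := invertibleOfNonzero hn'
  rw [eq_div_iff (pow_ne_zero _ hn'), ← invOf_eq_inv, ← eval₂_id, ← eval₂_id,
    eval₂_reverse_mul_pow]

theorem isBigO_eval_natCast (P : 𝕜[X]) :
    (fun n : ℕ => P.eval (n : 𝕜)) =O[atTop] fun n : ℕ => (n : 𝕜) ^ P.natDegree :=
  isBigO_of_div_tendsto_nhds ((eventually_ne_atTop 0).mono fun _ hn h =>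
    absurd h (pow_ne_zero _ (Nat.cast_ne_zero.2 hn))) _ P.tendsto_eval_natCast_div_pow_natDegree_s10

theorem one_isBigO_eval_natCast {P : 𝕜[X]} (hP : P ≠ 0) :
    (fun _ : ℕ => (1 : 𝕜)) =O[atTop] fun n : ℕ => P.eval (n : 𝕜) := by
  have hlc : P.leadingCoeff ≠ 0 := leadingCoeff_ne_zero.2 hP
  refine (isBigO_const_left_iff_pos_le_norm one_ne_zero).2 ⟨‖P.leadingCoeff‖ / 2, by positivity, ?_⟩
  filter_upwards [P.tendsto_eval_natCast_div_pow_natDegree_s10.norm.eventually_const_le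
    (half_lt_self (norm_pos_iff.2 hlc)), eventually_ge_atTop 1] with n hlow hn
  calc ‖P.leadingCoeff‖ / 2 ≤ ‖P.eval (n : 𝕜) / (n : 𝕜) ^ P.natDegree‖ := hlow
    _ ≤ ‖P.eval (n : 𝕜)‖ := by
      rw [norm_div, norm_pow, RCLike.norm_natCast]
      exact div_le_self (norm_nonneg _) (one_le_pow₀ (by exact_mod_cast hn))

theorem tendsto_natCast_succ_pow_div_pow (d : ℕ) :
    Tendsto (fun n : ℕ => ((n + 1 : ℕ) : 𝕜) ^ d / (n : 𝕜) ^ d) atTop (𝓝 1) := by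
  have h : Tendsto (fun n : ℕ => (1 + (n : 𝕜)⁻¹) ^ d) atTop (𝓝 1) := by
    simpa using ((tendsto_const_nhds (x := (1 : 𝕜))).add tendsto_inv_atTop_nhds_zero_nat).pow d
  refine h.congr' ((eventually_ne_atTop 0).mono fun n hn => ?_)
  have hn' : (n : 𝕜) ≠ 0 := Nat.cast_ne_zero.2 hn
  simp only [← div_pow]
  push_cast
  field_simp

theorem tendsto_eval_natCast_succ_div {P : 𝕜[X]} (hP : P ≠ 0) :
    Tendsto (fun n : ℕ => P.eval ((n + 1 : ℕ) : 𝕜) / P.eval (n : 𝕜)) atTop (𝓝 1) := by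
  have hlc : P.leadingCoeff ≠ 0 := leadingCoeff_ne_zero.2 hP
  have h := P.tendsto_eval_natCast_div_pow_natDegree_s10
  have := ((h.comp (tendsto_add_atTop_nat 1)).div h hlc).mul
    (tendsto_natCast_succ_pow_div_pow (𝕜 := 𝕜) P.natDegree)
  rw [div_self hlc, one_mul] at this
  refine this.congr' ((eventually_ne_atTop 0).mono fun n hn => ?_)
  have hn' : (n : 𝕜) ≠ 0 := Nat.cast_ne_zero.2 hn
  have hn'' : ((n + 1 : ℕ) : 𝕜) ≠ 0 := Nat.cast_ne_zero.2 n.succ_ne_zero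
  simp only [Function.comp_apply, Pi.div_apply]
  field_simp

end Polynomial

theorem le_pow_mul_of_le_mul_succ {u : ℕ → ℝ} {ρ : ℝ} {N : ℕ} (hρ : 0 ≤ ρ)
    (h : ∀ n, N ≤ n → u n ≤ ρ * u (n + 1)) {j n : ℕ} (hj : N ≤ j) (hjn : j ≤ n) :
    u j ≤ ρ ^ (n - j) * u n := by
  induction n, hjn using Nat.le_induction with
  | base => simp
  | succ n hjn ih =>
    calc u j ≤ ρ ^ (n - j) * u n := ih
      _ ≤ ρ ^ (n - j) * (ρ * u (n + 1)) := by gcongr; exact h n (hj.trans hjn)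
      _ = ρ ^ (n + 1 - j) * u (n + 1) := by rw [Nat.sub_add_comm hjn, pow_succ, mul_assoc]

theorem MonotoneOn.exists_le_mul_pow_mul {u : ℕ → ℝ} {ρ : ℝ} {N₀ : ℕ}
    (hu : MonotoneOn u (Set.Ici N₀)) (hu0 : ∀ n, 0 ≤ u n) (hρ0 : 0 < ρ) (hρ1 : ρ ≤ 1)
    (h : ∀ᶠ n in atTop, u n ≤ ρ * u (n + 1)) :
    ∃ K, 0 < K ∧ ∀ᶠ n in atTop, ∀ n₁, N₀ ≤ n₁ → n₁ ≤ n → u n₁ ≤ K * ρ ^ (n - n₁) * u n := by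
  obtain ⟨N, hN⟩ := eventually_atTop.1 h
  refine ⟨ρ⁻¹ ^ N, by positivity, (eventually_ge_atTop N).mono fun n hn n₁ hn₁ hn₁n => ?_⟩
  have hpow : ρ ^ (n - max n₁ N) ≤ ρ⁻¹ ^ N * ρ ^ (n - n₁) := by
    rw [inv_pow, inv_mul_eq_div, le_div_iff₀ (by positivity), ← pow_add]
    exact pow_le_pow_of_le_one hρ0.le hρ1 (by omega)
  calc u n₁ ≤ u (max n₁ N) := hu hn₁ (le_trans hn₁ (le_max_left _ _)) (le_max_left _ _)
    _ ≤ ρ ^ (n - max n₁ N) * u n :=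
      le_pow_mul_of_le_mul_succ hρ0.le hN (le_max_right _ _) (max_le hn₁n hn)
    _ ≤ ρ⁻¹ ^ N * ρ ^ (n - n₁) * u n := by gcongr; exact hu0 n

theorem MonotoneOn.eventually_le_mul_of_lt {u : ℕ → ℝ} {ρ : ℝ} {N₀ : ℕ}
    (hu : MonotoneOn u (Set.Ici N₀)) (h : ∀ᶠ n in atTop, u n ≤ ρ * u (n + 1)) :
    ∀ᶠ n in atTop, ∀ n₁, N₀ ≤ n₁ → n₁ < n → u n₁ ≤ ρ * u n := by
  obtain ⟨N, hN⟩ := eventually_atTop.1 h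
  filter_upwards [eventually_ge_atTop (N + 1)] with n hn n₁ hn₁ hn₁n
  obtain ⟨p, rfl⟩ : ∃ p, n = p + 1 := ⟨n - 1, by omega⟩
  exact (hu hn₁ (le_trans hn₁ (by omega)) (by omega)).trans (hN p (by omega))

theorem norm_div_sub_one_le_max {𝕜 : Type*} [NormedField 𝕜] {x y u u₁ v v₁ : 𝕜}
    {s t δ c : ℝ} (hs : 0 ≤ s) (ht : 0 ≤ t) (hδ : 0 < δ) (heq : u - u₁ = v - v₁)
    (hu : ‖u₁‖ + ‖u - x‖ ≤ s * ‖u‖) (hgap : δ * ‖u‖ ≤ ‖u - u₁‖)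
    (hv : ‖v₁‖ + ‖v - y‖ ≤ t * ‖v‖) (hv₁ : ‖v₁‖ ≤ ‖v‖) (hvy : ‖v‖ ≤ c * ‖y‖) (hv0 : v ≠ 0) :
    y ≠ 0 ∧ ‖x / y - 1‖ ≤ max (4 * c / δ * s) (2 * c * t) := by
  have hcy : 0 < c * ‖y‖ := (norm_pos_iff.2 hv0).trans_le hvy
  have hy : y ≠ 0 := by rintro rfl; simp at hcy
  have hu_le : ‖u‖ ≤ 2 * c / δ * ‖y‖ := by
    have : ‖u - u₁‖ ≤ 2 * ‖v‖ := heq ▸ (norm_sub_le v v₁).trans (by linarith)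
    rw [div_mul_eq_mul_div, le_div_iff₀ hδ]
    linarith
  have hxy : ‖x - y‖ ≤ s * ‖u‖ + t * ‖v‖ := by
    have : x - y = u₁ + -(u - x) + -v₁ + (v - y) := by linear_combination heq
    rw [this]
    linarith [norm_add₄_le (a := u₁) (b := -(u - x)) (c := -v₁) (d := v - y), norm_neg (u - x),
      norm_neg v₁]
  refine ⟨hy, ?_⟩
  rw [div_sub_one hy, norm_div, div_le_iff₀ (norm_pos_iff.2 hy)]
  calc ‖x - y‖ ≤ s * ‖u‖ + t * ‖v‖ := hxy
    _ ≤ s * (2 * c / δ * ‖y‖) + t * (c * ‖y‖) := by gcongr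
    _ = (4 * c / δ * s / 2 + 2 * c * t / 2) * ‖y‖ := by ring
    _ ≤ max (4 * c / δ * s) (2 * c * t) * ‖y‖ := by
      gcongr
      linarith [le_max_left (4 * c / δ * s) (2 * c * t), le_max_right (4 * c / δ * s) (2 * c * t)]

namespace LinRecSeq

variable (R : LinRecSeq)

noncomputable def domTerm (z : ℂ) (n : ℕ) : ℂ := R.domPoly.eval (n : ℂ) * z ^ n

variable {z : ℂ}

theorem U_sub_domTerm_eq_sum (hz : R.root R.i0 = z) (n : ℕ) :
    (R.U n : ℂ) - R.domTerm z n =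
      ∑ i ∈ univ.erase R.i0, (R.a i).eval (n : ℂ) * R.root i ^ n := by
  rw [R.formula n, ← add_sum_erase _ _ (mem_univ R.i0), domTerm, domPoly, hz, add_sub_cancel_left]

theorem isBigO_U_sub_domTerm (hz : R.root R.i0 = z) {r : ℝ}
    (hr : ∀ i, i ≠ R.i0 → ‖R.root i‖ < r) :
    (fun n : ℕ => (R.U n : ℂ) - R.domTerm z n) =O[atTop] fun n => r ^ n := by
  simp_rw [R.U_sub_domTerm_eq_sum hz]
  refine IsBigO.fun_sum fun i hi => ?_
  exact ((R.a i).isBigO_eval_natCast.mul (isBigO_refl _ _)).trans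
    (isLittleO_pow_const_mul_const_pow_const_pow_of_norm_lt _ (hr i (ne_of_mem_erase hi))).isBigO

theorem isBigO_U_sub_domTerm_pow_mul (hz : R.root R.i0 = z) {r : ℝ}
    (hr : ∀ i, i ≠ R.i0 → ‖R.root i‖ < r) (hz0 : z ≠ 0) :
    (fun n : ℕ => (R.U n : ℂ) - R.domTerm z n) =O[atTop]
      fun n => (r / ‖z‖) ^ n * ‖R.domTerm z n‖ := by
  have hzpow : (fun n : ℕ => ‖z‖ ^ n) =O[atTop] R.domTerm z := by
    have h := ((one_isBigO_eval_natCast (P := R.domPoly) (R.a_ne R.i0)).mul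
      (isBigO_refl (fun n => z ^ n) atTop)).norm_left
    simp only [one_mul, norm_pow] at h
    exact h
  have hr_eq : (fun n : ℕ => r ^ n) = fun n => (r / ‖z‖) ^ n * ‖z‖ ^ n := by
    ext n
    rw [← mul_pow, div_mul_cancel₀ _ (norm_ne_zero_iff.2 hz0)]
  exact (R.isBigO_U_sub_domTerm hz hr).trans
    (hr_eq ▸ (isBigO_refl (fun n => (r / ‖z‖) ^ n) _).mul hzpow.norm_right)

theorem isEquivalent_U_domTerm (hz : R.root R.i0 = z) {r : ℝ} (hr0 : 0 ≤ r)
    (hr : ∀ i, i ≠ R.i0 → ‖R.root i‖ < r) (hrz : r < ‖z‖) :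
    (fun n : ℕ => (R.U n : ℂ)) ~[atTop] R.domTerm z := by
  have hz0 : z ≠ 0 := norm_pos_iff.1 (hr0.trans_lt hrz)
  have hρ : (fun n : ℕ => (r / ‖z‖) ^ n) =o[atTop] fun _ => (1 : ℂ) :=
    (isLittleO_one_iff ℂ).2 (tendsto_pow_atTop_nhds_zero_of_lt_one (by positivity)
      ((div_lt_one (hr0.trans_lt hrz)).2 hrz))
  have h := hρ.mul_isBigO (isBigO_norm_left.2 (isBigO_refl (R.domTerm z) atTop))
  simp only [one_mul] at h
  exact (R.isBigO_U_sub_domTerm_pow_mul hz hr hz0).trans_isLittleO h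

theorem tendsto_U_succ_div_U (hz : R.root R.i0 = z) {r : ℝ} (hr0 : 0 ≤ r)
    (hr : ∀ i, i ≠ R.i0 → ‖R.root i‖ < r) (hrz : r < ‖z‖) :
    Tendsto (fun n : ℕ => (R.U (n + 1) : ℂ) / R.U n) atTop (𝓝 z) := by
  have hz0 : z ≠ 0 := norm_pos_iff.1 (hr0.trans_lt hrz)
  have hequiv := R.isEquivalent_U_domTerm hz hr0 hr hrz
  have hdom : Tendsto (fun n : ℕ => R.domTerm z (n + 1) / R.domTerm z n) atTop (𝓝 z) := by
    have h := (tendsto_eval_natCast_succ_div (R.a_ne R.i0)).mul_const z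
    rw [one_mul] at h
    refine h.congr fun n => ?_
    rw [domTerm, domTerm, pow_succ, mul_comm (z ^ n) z, ← mul_assoc,
      mul_div_mul_right _ _ (pow_ne_zero _ hz0), div_mul_eq_mul_div, domPoly]
  exact ((hequiv.comp_tendsto (tendsto_add_atTop_nat 1)).div hequiv).symm.tendsto_nhds hdom

theorem eventually_norm_U_le_mul_norm_U_succ (hz : R.root R.i0 = z) {r : ℝ} (hr1 : 1 < r)
    (hr : ∀ i, i ≠ R.i0 → ‖R.root i‖ < r) (hrz : r < ‖z‖) :
    ∀ᶠ n in atTop, ‖(R.U n : ℂ)‖ ≤ r / ‖z‖ * ‖(R.U (n + 1) : ℂ)‖ := by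
  have hz0 : 0 < ‖z‖ := by linarith
  filter_upwards [(R.tendsto_U_succ_div_U hz (by linarith) hr hrz).norm.eventually_const_le
    (div_lt_self hz0 hr1)] with n hn
  rcases eq_or_ne (R.U n : ℂ) 0 with h0 | h0
  · rw [h0, norm_zero]; positivity
  rw [norm_div, le_div_iff₀ (norm_pos_iff.2 h0), div_mul_eq_mul_div,
    div_le_iff₀ (by linarith)] at hn
  rw [div_mul_eq_mul_div, le_div_iff₀ hz0]
  linarith

theorem exists_estimates (hz : R.root R.i0 = z) {r : ℝ} (hr1 : 1 < r)
    (hr : ∀ i, i ≠ R.i0 → ‖R.root i‖ < r) (hrz : r < ‖z‖) {N₀ : ℕ}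
    (hmono : ∀ n, N₀ ≤ n → 0 < |R.U n| ∧ |R.U n| < |R.U (n + 1)|) :
    ∃ K c δ : ℝ, 0 < K ∧ 0 < c ∧ 0 < δ ∧ ∃ N, ∀ n n₁, N ≤ n → N₀ ≤ n₁ → n₁ < n →
      ‖(R.U n₁ : ℂ)‖ + ‖(R.U n : ℂ) - R.domTerm z n‖ ≤
          K * (r / ‖z‖) ^ (n - n₁) * ‖(R.U n : ℂ)‖ ∧
        δ * ‖(R.U n : ℂ)‖ ≤ ‖(R.U n : ℂ) - R.U n₁‖ ∧
        ‖(R.U n₁ : ℂ)‖ ≤ ‖(R.U n : ℂ)‖ ∧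
        ‖(R.U n : ℂ)‖ ≤ c * ‖R.domTerm z n‖ ∧ (R.U n : ℂ) ≠ 0 := by
  have hnorm : ∀ n, ‖(R.U n : ℂ)‖ = ((|R.U n| : ℤ) : ℝ) := fun n => by
    rw [Complex.norm_intCast, Int.cast_abs]
  set ρ := r / ‖z‖
  have hρ0 : 0 < ρ := div_pos (by linarith) (by linarith)
  have hρ1 : ρ < 1 := (div_lt_one (by linarith)).2 hrz
  have hmon : MonotoneOn (fun n => ‖(R.U n : ℂ)‖) (Set.Ici N₀) :=
    monotoneOn_nat_Ici_of_le_succ fun n hn => by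
      simp only [hnorm]; exact_mod_cast (hmono n hn).2.le
  have hratio := R.eventually_norm_U_le_mul_norm_U_succ hz hr1 hr hrz
  obtain ⟨K₁, hK₁, hdecay⟩ := hmon.exists_le_mul_pow_mul (fun _ => norm_nonneg _) hρ0 hρ1.le hratio
  have hequiv := R.isEquivalent_U_domTerm hz (by linarith) hr hrz
  obtain ⟨K₂, hK₂, hE⟩ :=
    ((R.isBigO_U_sub_domTerm_pow_mul hz hr (norm_pos_iff.1 (by linarith))).trans
      ((isBigO_refl (fun n => ρ ^ n) atTop).mul hequiv.isBigO_symm.norm_norm)).exists_pos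
  obtain ⟨c, hc, hUX⟩ := hequiv.isBigO.exists_pos
  obtain ⟨N, hN⟩ := eventually_atTop.1 (hdecay.and ((hmon.eventually_le_mul_of_lt hratio).and
    (hE.bound.and hUX.bound)))
  refine ⟨K₁ + K₂, c, 1 - ρ, by positivity, hc, by linarith, N, fun n n₁ hn hn₁ hn₁n => ?_⟩
  obtain ⟨hdec, hgap, hEn, hUXn⟩ := hN n hn
  have hN₀n : N₀ ≤ n := hn₁.trans hn₁n.le
  refine ⟨?_, ?_, hmon hn₁ hN₀n hn₁n.le, by simpa using hUXn, ?_⟩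
  · have hpow : ρ ^ n ≤ ρ ^ (n - n₁) := pow_le_pow_of_le_one hρ0.le hρ1.le (Nat.sub_le n n₁)
    simp only [norm_mul, norm_pow, Real.norm_eq_abs, abs_norm, abs_of_pos hρ0] at hEn
    calc ‖(R.U n₁ : ℂ)‖ + ‖(R.U n : ℂ) - R.domTerm z n‖
        ≤ K₁ * ρ ^ (n - n₁) * ‖(R.U n : ℂ)‖ + K₂ * (ρ ^ n * ‖(R.U n : ℂ)‖) :=
          add_le_add (hdec n₁ hn₁ hn₁n.le) hEn
      _ ≤ (K₁ + K₂) * ρ ^ (n - n₁) * ‖(R.U n : ℂ)‖ := by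
          have := norm_nonneg (R.U n : ℂ)
          nlinarith [mul_le_mul_of_nonneg_right hpow this]
  · linarith [hgap n₁ hn₁ hn₁n, norm_sub_norm_le (R.U n : ℂ) (R.U n₁)]
  · rw [← norm_pos_iff, hnorm]
    exact_mod_cast (hmono n hN₀n).1

end LinRecSeq

theorem main_term_approximation_general (Ru Rv : LinRecSeq) (α β : ℂ)
    (hU : Ru.HasDomRoot α) (hV : Rv.HasDomRoot β)
    (N₀ M₀ : ℕ)
    (hUmono : ∀ n : ℕ, N₀ ≤ n → 0 < |Ru.U n| ∧ |Ru.U n| < |Ru.U (n + 1)|)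
    (hVmono : ∀ m : ℕ, M₀ ≤ m → 0 < |Rv.U m| ∧ |Rv.U m| < |Rv.U (m + 1)|)
    (α' β' : ℝ)
    (hα'1 : 1 < α') (hα'2 : α' < ‖α‖)
    (hα'3 : ∀ i, i ≠ Ru.i0 → ‖Ru.root i‖ < α')
    (hβ'1 : 1 < β') (hβ'2 : β' < ‖β‖)
    (hβ'3 : ∀ i, i ≠ Rv.i0 → ‖Rv.root i‖ < β') :
    ∃ C₁₆ C₁₇ : ℝ, 0 < C₁₆ ∧ 0 < C₁₇ ∧ ∃ N M : ℕ,
      ∀ n m n₁ m₁ : ℕ, N₀ ≤ n₁ → n₁ < n → M₀ ≤ m₁ → m₁ < m → N ≤ n → M ≤ m →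
        Ru.U n - Ru.U n₁ = Rv.U m - Rv.U m₁ →
        Rv.domPoly.eval (m : ℂ) ≠ 0 ∧
        ‖(Ru.domPoly.eval (n : ℂ) * α ^ n) /
            (Rv.domPoly.eval (m : ℂ) * β ^ m) - 1‖
          ≤ max (C₁₆ * (α' / ‖α‖) ^ (n - n₁))
              (C₁₇ * (β' / ‖β‖) ^ (m - m₁)) := by
  obtain ⟨Ku, _, δu, hKu, -, hδu, N, hu⟩ := Ru.exists_estimates hU.1 hα'1 hα'3 hα'2 hUmono
  obtain ⟨Kv, cv, _, hKv, hcv, -, M, hv⟩ := Rv.exists_estimates hV.1 hβ'1 hβ'3 hβ'2 hVmono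
  refine ⟨4 * cv / δu * Ku, 2 * cv * Kv, by positivity, by positivity, N, M,
    fun n m n₁ m₁ hn₁ hn₁n hm₁ hm₁m hn hm heq => ?_⟩
  obtain ⟨hu₁, hgap, -⟩ := hu n n₁ hn hn₁ hn₁n
  obtain ⟨hv₁, -, hvv₁, hvy, hv0⟩ := hv m m₁ hm hm₁ hm₁m
  obtain ⟨hy, hbound⟩ := norm_div_sub_one_le_max (by positivity) (by positivity) hδu
    (by exact_mod_cast heq) hu₁ hgap hv₁ hvv₁ hvy hv0
  exact ⟨left_ne_zero_of_mul hy, by simpa only [mul_assoc, LinRecSeq.domTerm] using hbound⟩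

/-- **Approximation of the main terms.** There are constants `C₁₆, C₁₇ > 0` and integers
`N, M` such that every solution `(n, m, n₁, m₁)` of `U n − U n₁ = V m − V m₁` with
`n > n₁ ≥ N₀`, `m > m₁ ≥ M₀`, `n ≥ N`, `m ≥ M` satisfies `b(m) ≠ 0` and
`|a(n)αⁿ/(b(m)βᵐ) − 1| ≤ max{C₁₆·(α'/|α|)^(n−n₁), C₁₇·(β'/|β|)^(m−m₁)}`. -/
theorem main_term_approximation (Ru Rv : LinRecSeq) (α β : ℂ)
    (hU : Ru.HasDomRoot α) (hV : Rv.HasDomRoot β)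
    (hindep : MultIndep α β)
    (hβ1 : 1 < ‖β‖) (hβα : ‖β‖ < ‖α‖)
    (N₀ M₀ : ℕ)
    (hUmono : ∀ n : ℕ, N₀ ≤ n → 0 < |Ru.U n| ∧ |Ru.U n| < |Ru.U (n + 1)|)
    (hVmono : ∀ m : ℕ, M₀ ≤ m → 0 < |Rv.U m| ∧ |Rv.U m| < |Rv.U (m + 1)|)
    (α' β' : ℝ)
    (hα'1 : 1 < α') (hα'2 : α' < ‖α‖)
    (hα'3 : ∀ i, i ≠ Ru.i0 → ‖Ru.root i‖ < α')
    (hβ'1 : 1 < β') (hβ'2 : β' < ‖β‖)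
    (hβ'3 : ∀ i, i ≠ Rv.i0 → ‖Rv.root i‖ < β') :
    ∃ C₁₆ C₁₇ : ℝ, 0 < C₁₆ ∧ 0 < C₁₇ ∧ ∃ N M : ℕ,
      ∀ n m n₁ m₁ : ℕ, N₀ ≤ n₁ → n₁ < n → M₀ ≤ m₁ → m₁ < m → N ≤ n → M ≤ m →
        Ru.U n - Ru.U n₁ = Rv.U m - Rv.U m₁ →
        Rv.domPoly.eval (m : ℂ) ≠ 0 ∧
        ‖(Ru.domPoly.eval (n : ℂ) * α ^ n) /
            (Rv.domPoly.eval (m : ℂ) * β ^ m) - 1‖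
          ≤ max (C₁₆ * (α' / ‖α‖) ^ (n - n₁))
              (C₁₇ * (β' / ‖β‖) ^ (m - m₁)) :=
  main_term_approximation_general Ru Rv α β hU hV N₀ M₀ hUmono hVmono α' β' hα'1 hα'2 hα'3 hβ'1 hβ'2
    hβ'3
end

section
/- Let K be a number field, let α, β ∈ K be nonzero and multiplicatively independent, and let p, q ∈ K[X] be nonzero polynomials. Then there are only finitely many pairs (n, m) ∈ ℕ × ℕ such that q(m)·α^n = p(n)·β^m. -/
/-!
With `h` the logarithmic height, taking `log |·|_v` of `q(m) αⁿ = p(n) βᵐ` at any place `v` gives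
`|n log |α|_v - m log |β|_v| ≤ h(p(n)) + h(q(m)) = O(1 + log n + log m)`.
Multiplicative independence makes the vectors `(log |α|_v)_v` and `(log |β|_v)_v` linearly
independent over `ℝ`: if `log |β|_v = s log |α|_v` for all `v`, the elements `α^round(l s) β^(-l)`
have bounded height, so by Northcott two of them coincide. Cramer's rule at two places with
nonzero determinant then bounds `n` and `m` by `O(1 + log n + log m)`.
-/

open Polynomial Real

theorem Polynomial.finite_setOf_eval_natCast_eq_zero {R : Type*} [CommRing R] [IsDomain R]
    [CharZero R] {p : R[X]} (hp : p ≠ 0) : {n : ℕ | p.eval (n : R) = 0}.Finite :=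
  (finite_setOfPred_isRoot hp).preimage Nat.cast_injective.injOn

theorem Real.abs_log_eq_posLog_add_posLog_inv (t : ℝ) : |log t| = log⁺ t + log⁺ t⁻¹ := by
  have h₁ := posLog_sub_posLog_inv (x := t)
  have h₂ := half_mul_log_add_log_abs (x := t)
  linarith

theorem AbsoluteValue.log_apply_zpow_mul_zpow {K : Type*} [Field K] (v : AbsoluteValue K ℝ)
    {x y : K} (hx : x ≠ 0) (hy : y ≠ 0) (a b : ℤ) :
    log (v (x ^ a * y ^ b)) = a * log (v x) + b * log (v y) := by
  rw [map_mul, map_zpow₀, map_zpow₀, log_mul (zpow_ne_zero _ (v.ne_zero hx))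
    (zpow_ne_zero _ (v.ne_zero hy)), log_zpow, log_zpow]

theorem Real.finite_setOf_natCast_le_add_mul_log (a b : ℝ) :
    {N : ℕ | (N : ℝ) ≤ a + b * log N}.Finite := by
  have hlittle : (fun x : ℝ ↦ a + b * log x) =o[Filter.atTop] id :=
    (Asymptotics.isLittleO_const_id_atTop a).add (isLittleO_log_id_atTop.const_mul_left b)
  have hlt : ∀ᶠ x : ℝ in Filter.atTop, a + b * log x < x := by
    filter_upwards [hlittle.def one_half_pos, Filter.eventually_gt_atTop 0] with x hx hx₀
    have := le_abs_self (a + b * log x)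
    rw [Real.norm_eq_abs, Real.norm_eq_abs, id, abs_of_pos hx₀] at hx
    linarith
  obtain ⟨N₀, hN₀⟩ := Filter.eventually_atTop.mp (tendsto_natCast_atTop_atTop.eventually hlt)
  exact (Set.finite_lt_nat N₀).subset fun N hN ↦ not_le.mp fun h ↦ (hN₀ N h).not_ge hN

theorem abs_mul_abs_det_le_of_abs_le {a b c d x y E : ℝ} (h₁ : |a * x + b * y| ≤ E)
    (h₂ : |c * x + d * y| ≤ E) :
    |x| * |a * d - b * c| ≤ E * (|b| + |d|) ∧ |y| * |a * d - b * c| ≤ E * (|a| + |c|) := by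
  constructor
  · calc |x| * |a * d - b * c| = |(a * x + b * y) * d - (c * x + d * y) * b| := by
          rw [← abs_mul]; ring_nf
      _ ≤ |a * x + b * y| * |d| + |c * x + d * y| * |b| := by
          rw [← abs_mul, ← abs_mul]; exact abs_sub _ _
      _ ≤ E * (|b| + |d|) := by
          nlinarith [mul_le_mul_of_nonneg_right h₁ (abs_nonneg d),
            mul_le_mul_of_nonneg_right h₂ (abs_nonneg b)]
  · calc |y| * |a * d - b * c| = |(c * x + d * y) * a - (a * x + b * y) * c| := by
          rw [← abs_mul]; ring_nf
      _ ≤ |c * x + d * y| * |a| + |a * x + b * y| * |c| := by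
          rw [← abs_mul, ← abs_mul]; exact abs_sub _ _
      _ ≤ E * (|a| + |c|) := by
          nlinarith [mul_le_mul_of_nonneg_right h₁ (abs_nonneg c),
            mul_le_mul_of_nonneg_right h₂ (abs_nonneg a)]

theorem finite_setOf_abs_add_le_mul_log {a b c d : ℝ} (hdet : a * d - b * c ≠ 0) (B : ℝ) :
    {nm : ℕ × ℕ | |a * nm.1 + b * nm.2| ≤ B * (1 + log nm.1 + log nm.2) ∧
      |c * nm.1 + d * nm.2| ≤ B * (1 + log nm.1 + log nm.2)}.Finite := by
  set B' := |B| * (|a| + |b| + |c| + |d|) / |a * d - b * c|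
  obtain ⟨T, hT⟩ := (finite_setOf_natCast_le_add_mul_log B' (2 * B')).bddAbove
  refine ((Set.finite_Iic T).prod (Set.finite_Iic T)).subset ?_
  rintro ⟨n, m⟩ ⟨h₁, h₂⟩
  have hL : 0 ≤ 1 + log n + log m := by
    have := log_natCast_nonneg n; have := log_natCast_nonneg m; positivity
  have hdet' : 0 < |a * d - b * c| := abs_pos.mpr hdet
  have hBL := mul_le_mul_of_nonneg_right (le_abs_self B) hL
  obtain ⟨hn, hm⟩ := abs_mul_abs_det_le_of_abs_le (h₁.trans hBL) (h₂.trans hBL)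
  rw [Nat.abs_cast] at hn hm
  have hBL₀ := mul_nonneg (abs_nonneg B) hL
  have hn' : (n : ℝ) ≤ B' * (1 + log n + log m) := by
    rw [div_mul_eq_mul_div, le_div_iff₀ hdet']
    nlinarith [mul_nonneg hBL₀ (abs_nonneg a), mul_nonneg hBL₀ (abs_nonneg c)]
  have hm' : (m : ℝ) ≤ B' * (1 + log n + log m) := by
    rw [div_mul_eq_mul_div, le_div_iff₀ hdet']
    nlinarith [mul_nonneg hBL₀ (abs_nonneg b), mul_nonneg hBL₀ (abs_nonneg d)]
  have hlog_le : ∀ {k : ℕ}, k ≤ max n m → log k ≤ log (max n m : ℕ) := fun {k} hk ↦ by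
    rcases k.eq_zero_or_pos with rfl | hk₀
    · simpa using log_natCast_nonneg (max n m)
    · exact log_le_log (by exact_mod_cast hk₀) (by exact_mod_cast hk)
  have hN : ((max n m : ℕ) : ℝ) ≤ B' + 2 * B' * log (max n m : ℕ) := by
    have : 0 ≤ B' := by positivity
    calc ((max n m : ℕ) : ℝ) = max (n : ℝ) m := Nat.cast_max n m
      _ ≤ B' * (1 + log n + log m) := max_le hn' hm'
      _ ≤ B' + 2 * B' * log (max n m : ℕ) := by
          nlinarith [hlog_le (le_max_left n m), hlog_le (le_max_right n m)]
  exact ⟨(le_max_left n m).trans (hT hN), (le_max_right n m).trans (hT hN)⟩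

namespace Height

open AdmissibleAbsValues

variable {K : Type*} [Field K] [AdmissibleAbsValues K]

def IsPlace (v : AbsoluteValue K ℝ) : Prop := v ∈ archAbsVal ∨ v ∈ nonarchAbsVal

theorem posLog_le_logHeight₁ {v : AbsoluteValue K ℝ} (hv : IsPlace v) (x : K) :
    log⁺ (v x) ≤ logHeight₁ x := by
  have harch : 0 ≤ (archAbsVal.map fun v ↦ log⁺ (v x)).sum :=
    Multiset.sum_nonneg fun _ h ↦ by
      obtain ⟨_, _, rfl⟩ := Multiset.mem_map.mp h; exact posLog_nonneg
  have hnonarch : 0 ≤ ∑ᶠ v : nonarchAbsVal, log⁺ (v.val x) := finsum_nonneg fun _ ↦ posLog_nonneg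
  rw [logHeight₁_eq]
  rcases hv with hv | hv
  · have := Multiset.single_le_sum (fun _ h ↦ by
      obtain ⟨_, _, rfl⟩ := Multiset.mem_map.mp h; exact posLog_nonneg) _
      (Multiset.mem_map_of_mem (fun v ↦ log⁺ (v x)) hv)
    linarith
  · have hsupp : Function.HasFiniteSupport fun v : nonarchAbsVal ↦ log⁺ (v.val x) := by
      rcases eq_or_ne x 0 with rfl | hx
      · simp [Function.HasFiniteSupport]
      · refine (hasFiniteMulSupport hx).subset fun v hv ↦ ?_
        contrapose! hv
        simp [Function.notMem_mulSupport.mp hv]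
    have := single_le_finsum ⟨v, hv⟩ hsupp fun _ ↦ posLog_nonneg
    linarith

theorem abs_log_le_logHeight₁ {v : AbsoluteValue K ℝ} (hv : IsPlace v) (x : K) :
    |log (v x)| ≤ logHeight₁ x := by
  refine abs_le.mpr ⟨?_, (le_max_right _ _).trans (posLog_le_logHeight₁ hv x)⟩
  have := (le_max_right _ _).trans (posLog_le_logHeight₁ hv x⁻¹)
  rw [map_inv₀, log_inv, logHeight₁_inv] at this
  linarith

theorem logHeight₁_le_add_of_forall_posLog_le {x y z : K}
    (h : ∀ v, IsPlace v → log⁺ (v x) ≤ log⁺ (v y) + log⁺ (v z)) :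
    logHeight₁ x ≤ logHeight₁ y + logHeight₁ z := by
  have hmax : ∀ v, IsPlace v → max (v x) 1 ≤ max (v y) 1 * max (v z) 1 := fun v hv ↦ by
    have := h v hv
    simp only [posLog_eq_log_max_one (v.nonneg _)] at this
    rw [← log_mul (by positivity) (by positivity), log_le_log_iff (by positivity)
      (by positivity)] at this
    rwa [max_comm (v x), max_comm (v y), max_comm (v z)]
  have hmul : mulHeight₁ x ≤ mulHeight₁ y * mulHeight₁ z := by
    simp only [mulHeight₁_eq]
    rw [mul_mul_mul_comm, ← Multiset.prod_map_mul, ← finprod_mul_distrib (by fun_prop)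
      (by fun_prop)]
    exact mul_le_mul
      (Multiset.prod_map_le_prod_map₀ _ _ (fun _ _ ↦ by positivity) fun v hv ↦ hmax v (.inl hv))
      (finprod_le_finprod (by fun_prop) (fun _ ↦ by positivity) (by fun_prop)
        fun v ↦ hmax v (.inr v.2))
      (finprod_nonneg fun _ ↦ by positivity)
      (Multiset.prod_map_nonneg fun _ _ ↦ by positivity)
  simp only [logHeight₁_eq_log_mulHeight₁]
  rw [← log_mul (mulHeight₁_ne_zero y) (mulHeight₁_ne_zero z)]
  exact log_le_log (mulHeight₁_pos x) hmul

theorem logHeight₁_natCast_le (n : ℕ) : logHeight₁ (n : K) ≤ totalWeight K * log n := by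
  simpa using logHeight₁_sum_le (Finset.range n) fun _ ↦ (1 : K)

theorem exists_logHeight₁_eval_le (p : K[X]) :
    ∃ C, 0 ≤ C ∧ ∀ x, logHeight₁ (p.eval x) ≤ C * (1 + logHeight₁ x) := by
  set d := p.natDegree
  set A := totalWeight K * log (d + 1) + ∑ i ∈ Finset.range (d + 1), logHeight₁ (p.coeff i)
  have hA : 0 ≤ A := by
    have : 0 ≤ log ((d : ℝ) + 1) := log_nonneg (by linarith [d.cast_nonneg (α := ℝ)])
    have := Finset.sum_nonneg fun i (_ : i ∈ Finset.range (d + 1)) ↦ zero_le_logHeight₁ (p.coeff i)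
    positivity
  refine ⟨A + (d + 1) * d, by positivity, fun x ↦ ?_⟩
  have hterm : ∀ i ∈ Finset.range (d + 1),
      logHeight₁ (p.coeff i * x ^ i) ≤ logHeight₁ (p.coeff i) + d * logHeight₁ x := fun i hi ↦ by
    have hid := mul_le_mul_of_nonneg_right (Nat.cast_le.mpr (Finset.mem_range_succ_iff.mp hi))
      (zero_le_logHeight₁ x)
    have hmul := logHeight₁_mul_le (p.coeff i) (x ^ i)
    rw [logHeight₁_pow] at hmul
    linarith
  calc logHeight₁ (p.eval x)
      ≤ totalWeight K * log (d + 1) +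
          ∑ i ∈ Finset.range (d + 1), logHeight₁ (p.coeff i * x ^ i) := by
        rw [eval_eq_sum_range]
        simpa using logHeight₁_sum_le (Finset.range (d + 1)) fun i ↦ p.coeff i * x ^ i
    _ ≤ A + (d + 1) * d * logHeight₁ x := by
        grw [Finset.sum_le_sum hterm, Finset.sum_add_distrib]
        rw [Finset.sum_const, Finset.card_range, nsmul_eq_mul]
        push_cast
        linarith
    _ ≤ (A + (d + 1) * d) * (1 + logHeight₁ x) := by
        nlinarith [zero_le_logHeight₁ x]

theorem exists_zpow_mul_zpow_eq_one_of_log_eq_mul [Northcott (logHeight₁ (K := K))] {α β : K}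
    (hα : α ≠ 0) (hβ : β ≠ 0) {s : ℝ} (h : ∀ v, IsPlace v → log (v β) = s * log (v α)) :
    ∃ a b : ℤ, b ≠ 0 ∧ α ^ a * β ^ b = 1 := by
  set x : ℕ → K := fun l ↦ α ^ round (l * s) * β ^ (-l : ℤ)
  have hx : ∀ l, logHeight₁ (x l) ≤ logHeight₁ α + logHeight₁ α⁻¹ := fun l ↦
    logHeight₁_le_add_of_forall_posLog_le fun v hv ↦ by
      have hlog : log (v (x l)) = (round (l * s) - l * s) * log (v α) := by
        rw [v.log_apply_zpow_mul_zpow hα hβ, h v hv]; push_cast; ring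
      have hround : |(round (l * s) : ℝ) - l * s| ≤ 1 := by
        rw [abs_sub_comm]; linarith [abs_sub_round ((l : ℝ) * s)]
      calc log⁺ (v (x l)) ≤ |log (v (x l))| := max_le (abs_nonneg _) (le_abs_self _)
        _ ≤ |log (v α)| := by
          rw [hlog, abs_mul]; exact mul_le_of_le_one_left (abs_nonneg _) hround
        _ = log⁺ (v α) + log⁺ (v α⁻¹) := by
          rw [map_inv₀, abs_log_eq_posLog_add_posLog_inv]
  obtain ⟨l₁, l₂, hlt, heq⟩ :=
    (Northcott.finite_le (h := logHeight₁ (K := K)) _).exists_lt_map_eq_of_forall_mem hx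
  refine ⟨round (l₁ * s) - round (l₂ * s), l₂ - l₁, by omega, ?_⟩
  simp only [x, zpow_neg] at heq
  rw [zpow_sub₀ hα, zpow_sub₀ hβ]
  field_simp at heq ⊢
  linear_combination heq

theorem exists_isPlace_log_mul_log_ne [Northcott (logHeight₁ (K := K))] {α β : K}
    (hα : α ≠ 0) (hβ : β ≠ 0) (hindep : ∀ a b : ℤ, α ^ a * β ^ b = 1 → a = 0 ∧ b = 0) :
    ∃ v w, IsPlace v ∧ IsPlace w ∧ log (v α) * log (w β) ≠ log (w α) * log (v β) := by
  by_contra! hcon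
  by_cases hα₀ : ∀ v, IsPlace v → log (v α) = 0
  · obtain ⟨a, b, hb, hab⟩ :=
      exists_zpow_mul_zpow_eq_one_of_log_eq_mul hβ hα (s := 0) (by simpa using hα₀)
    exact hb (hindep b a (by rwa [mul_comm])).1
  · push Not at hα₀
    obtain ⟨v₀, hv₀, hne⟩ := hα₀
    obtain ⟨a, b, hb, hab⟩ := exists_zpow_mul_zpow_eq_one_of_log_eq_mul hα hβ
      (s := log (v₀ β) / log (v₀ α)) fun w hw ↦ by
        rw [div_mul_eq_mul_div, eq_div_iff hne]
        linarith [hcon v₀ w hv₀ hw]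
    exact hb (hindep a b hab).2

theorem abs_natCast_mul_log_sub_le {v : AbsoluteValue K ℝ} (hv : IsPlace v) {α β a b : K}
    (hα : α ≠ 0) (hβ : β ≠ 0) (ha : a ≠ 0) (hb : b ≠ 0) {n m : ℕ} (h : b * α ^ n = a * β ^ m) :
    |log (v α) * n - log (v β) * m| ≤ logHeight₁ a + logHeight₁ b := by
  have hlog := congrArg (fun t ↦ log (v t)) h
  simp only [map_mul, map_pow] at hlog
  rw [log_mul (v.ne_zero hb) (pow_ne_zero _ (v.ne_zero hα)),
    log_mul (v.ne_zero ha) (pow_ne_zero _ (v.ne_zero hβ)), log_pow, log_pow] at hlog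
  calc |log (v α) * n - log (v β) * m| = |log (v a) - log (v b)| := by congr 1; linarith
    _ ≤ |log (v a)| + |log (v b)| := abs_sub _ _
    _ ≤ logHeight₁ a + logHeight₁ b :=
        add_le_add (abs_log_le_logHeight₁ hv a) (abs_log_le_logHeight₁ hv b)

theorem exists_logHeight₁_eval_natCast_le (p : K[X]) :
    ∃ C, 0 ≤ C ∧ ∀ n : ℕ, logHeight₁ (p.eval (n : K)) ≤ C * (1 + log n) := by
  obtain ⟨C, hC₀, hC⟩ := exists_logHeight₁_eval_le p
  refine ⟨C * (1 + totalWeight K), by positivity, fun n ↦ (hC n).trans ?_⟩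
  have := logHeight₁_natCast_le (K := K) n
  have := log_natCast_nonneg n
  have : (0 : ℝ) ≤ totalWeight K := (totalWeight K).cast_nonneg
  nlinarith

theorem finite_setOf_eval_mul_pow_eq_eval_mul_pow [CharZero K]
    [Northcott (logHeight₁ (K := K))] {α β : K} (hα : α ≠ 0) (hβ : β ≠ 0)
    (hindep : ∀ a b : ℤ, α ^ a * β ^ b = 1 → a = 0 ∧ b = 0) {p q : K[X]} (hp : p ≠ 0)
    (hq : q ≠ 0) :
    {nm : ℕ × ℕ | q.eval (nm.2 : K) * α ^ nm.1 = p.eval (nm.1 : K) * β ^ nm.2}.Finite := by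
  obtain ⟨v, w, hv, hw, hdet⟩ := exists_isPlace_log_mul_log_ne hα hβ hindep
  obtain ⟨Cp, hCp₀, hCp⟩ := exists_logHeight₁_eval_natCast_le p
  obtain ⟨Cq, hCq₀, hCq⟩ := exists_logHeight₁_eval_natCast_le q
  have hC : ∀ n m : ℕ, logHeight₁ (p.eval (n : K)) + logHeight₁ (q.eval (m : K)) ≤
      (Cp + Cq) * (1 + log n + log m) := fun n m ↦ by
    nlinarith [hCp n, hCq m, log_natCast_nonneg n, log_natCast_nonneg m]
  refine (((finite_setOf_eval_natCast_eq_zero hp).prod (finite_setOf_eval_natCast_eq_zero hq)).union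
    (finite_setOf_abs_add_le_mul_log (a := log (v α)) (b := -log (v β)) (c := log (w α))
      (d := -log (w β)) (fun h ↦ hdet (by linarith)) (Cp + Cq))).subset ?_
  rintro ⟨n, m⟩ h
  by_cases hpn : p.eval (n : K) = 0
  · exact .inl ⟨hpn, by simpa [hpn, hα] using h⟩
  have hqm : q.eval (m : K) ≠ 0 := fun hqm ↦ by simp [hqm, hpn, hβ] at h
  have hbound := fun u (hu : IsPlace u) ↦
    (abs_natCast_mul_log_sub_le hu hα hβ hpn hqm h).trans (hC n m)
  simp only [neg_mul, ← sub_eq_add_neg]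
  exact .inr ⟨hbound v hv, hbound w hw⟩

end Height

/-- **Finiteness of degenerate cases.** Let `K` be a number field, `α, β ∈ K` nonzero and
multiplicatively independent, and `p, q ∈ K[X]` nonzero. Then there are only finitely many
pairs `(n, m) ∈ ℕ × ℕ` with `q(m)·αⁿ = p(n)·βᵐ`. -/
theorem finitely_many_degenerate_pairs {K : Type*} [Field K] [NumberField K]
    (α β : K) (hα : α ≠ 0) (hβ : β ≠ 0)
    (hindep : ∀ a b : ℤ, α ^ a * β ^ b = 1 → a = 0 ∧ b = 0)
    (p q : K[X]) (hp : p ≠ 0) (hq : q ≠ 0) :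
    {nm : ℕ × ℕ | q.eval (nm.2 : K) * α ^ nm.1 = p.eval (nm.1 : K) * β ^ nm.2}.Finite :=
  Height.finite_setOf_eval_mul_pow_eq_eval_mul_pow hα hβ hindep hp hq
end
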